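/- Let M be a smooth manifold, Λ a bivector field and E a vector field on M satisfying [Λ,Λ] = 2E∧Λ and [Λ,E] = 0 (Schouten bracket conditions for a Jacobi structure). Then the bracket {f,g} = Λ(df,dg) + f·E(g) − E(f)·g is skew-symmetric and satisfies the Jacobi identity, making C^∞(M) a Lie algebra. -/
import Mathlib


/-- The Jacobi-structure bracket. -/
def jacobiBr {M : Type*} (Λ : (M → ℝ) → (M → ℝ) → (M → ℝ))
    (E : (M → ℝ) → (M → ℝ)) (f g : M → ℝ) : M → ℝ :=
  Λ f g + f * E g - E f * g

/-- Let `Λ` be a bivector field (a skew biderivation on functions, acting on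
pairs of differentials) and `E` a vector field (a derivation) satisfying the
Schouten-bracket conditions `[Λ,Λ] = 2E∧Λ` (`h1`, evaluated on `df,dg,dh`) and
`[Λ,E] = 0` (`h2`).  Then `{f,g} = Λ(df,dg) + f·E(g) − E(f)·g` is
skew-symmetric and satisfies the Jacobi identity, making `C^∞(M)` a Lie
algebra. -/
theorem stmt17 {M : Type*}
    (Λ : (M → ℝ) → (M → ℝ) → (M → ℝ))
    (E : (M → ℝ) → (M → ℝ))
    (hΛskew : ∀ f g, Λ f g = -Λ g f)
    (hΛadd : ∀ f g h, Λ f (g + h) = Λ f g + Λ f h)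
    (hΛleib : ∀ f g h, Λ f (g * h) = Λ f g * h + g * Λ f h)
    (hEadd : ∀ g h, E (g + h) = E g + E h)
    (hEleib : ∀ g h, E (g * h) = E g * h + g * E h)
    (h1 : ∀ f g h, Λ (Λ f g) h + Λ (Λ g h) f + Λ (Λ h f) g
        = E f * Λ g h + E g * Λ h f + E h * Λ f g)
    (h2 : ∀ f g, E (Λ f g) = Λ (E f) g + Λ f (E g)) :
    (∀ f g, jacobiBr Λ E f g = -jacobiBr Λ E g f) ∧
      (∀ f g h, jacobiBr Λ E f (jacobiBr Λ E g h)
          = jacobiBr Λ E (jacobiBr Λ E f g) h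
            + jacobiBr Λ E g (jacobiBr Λ E f h)) := by
  have Λzero : ∀ f, Λ f 0 = 0 := fun f => by
    have h := hΛadd f 0 0
    rw [add_zero] at h
    exact left_eq_add.mp h
  have Λneg : ∀ f g, Λ f (-g) = -Λ f g := fun f g => by
    have h := hΛadd f g (-g)
    rw [add_neg_cancel, Λzero] at h
    exact eq_neg_of_add_eq_zero_right h.symm
  have Λsub : ∀ f g h, Λ f (g - h) = Λ f g - Λ f h := fun f g h => by
    rw [sub_eq_add_neg, hΛadd, Λneg, sub_eq_add_neg]
  have Ezero : E 0 = 0 := by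
    have h := hEadd 0 0
    rw [add_zero] at h
    exact left_eq_add.mp h
  have Eneg : ∀ g, E (-g) = -E g := fun g => by
    have h := hEadd g (-g)
    rw [add_neg_cancel, Ezero] at h
    exact eq_neg_of_add_eq_zero_right h.symm
  have Esub : ∀ g h, E (g - h) = E g - E h := fun g h => by
    rw [sub_eq_add_neg, hEadd, Eneg, sub_eq_add_neg]
  have Λadd' : ∀ f g h, Λ (g + h) f = Λ g f + Λ h f := fun f g h => by
    rw [hΛskew, hΛadd, hΛskew f g, hΛskew f h]; ring
  have Λmul' : ∀ f g h, Λ (g * h) f = Λ g f * h + g * Λ h f := fun f g h => by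
    rw [hΛskew, hΛleib, hΛskew f g, hΛskew f h]; ring
  have Λsub' : ∀ f g h, Λ (g - h) f = Λ g f - Λ h f := fun f g h => by
    rw [hΛskew, Λsub, hΛskew f g, hΛskew f h]; ring
  refine ⟨fun f g => by simp only [jacobiBr, hΛskew f g]; ring, fun f g h => ?_⟩
  have Λneg1 : ∀ x y, Λ (-x) y = -Λ x y := fun x y => by
    rw [hΛskew, Λneg, hΛskew]; ring
  have s6 : Λ (Λ f h) g = -Λ (Λ h f) g := by rw [hΛskew f h, Λneg1]
  simp only [jacobiBr, hΛadd, hΛleib, hEadd, hEleib, Λsub, Esub, Λadd', Λmul', Λsub', h2]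
  linear_combination (-(h1 f g h)) + hΛskew f (Λ g h) - E h * hΛskew g f
    + h * hΛskew (E f) g - E g * hΛskew h f - hΛskew g (Λ f h) + s6
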